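/- Let G = C₄ ⊕ C₄ and let U, V be minimal zero-sum sequences over G such that L(UV) ∩ [2,5] = {2,5}. Then the support of UV generates G. -/

import Mathlib

open Multiset

/-- A minimal zero-sum sequence over `G`: a nonempty zero-sum sequence with no
proper nonempty zero-sum subsequence. -/
def IsMinZeroSum {G : Type*} [AddCommGroup G] (S : Multiset G) : Prop :=
  S ≠ 0 ∧ S.sum = 0 ∧ ∀ T : Multiset G, T ≤ S → T ≠ 0 → T ≠ S → T.sum ≠ 0

/-- The Davenport constant of `G`: the maximal length of a minimal zero-sum
sequence over `G`. -/
noncomputable def DavenportConstant (G : Type*) [AddCommGroup G] : ℕ :=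
  sSup {n : ℕ | ∃ S : Multiset G, IsMinZeroSum S ∧ Multiset.card S = n}

/-- The set of lengths of a zero-sum sequence `A`: the set of all `k` such that
`A` can be written as a product of `k` minimal zero-sum sequences. -/
def LengthsSet {G : Type*} [AddCommGroup G] (A : Multiset G) : Set ℕ :=
  {k : ℕ | ∃ f : Multiset (Multiset G), Multiset.card f = k ∧
    (∀ S ∈ f, IsMinZeroSum S) ∧ f.sum = A}

/-- A factorization of a zero-sum sequence `A` into minimal zero-sum sequences. -/
def IsFactorization {G : Type*} [AddCommGroup G] (A : Multiset G)
    (z : Multiset (Multiset G)) : Prop :=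
  (∀ S ∈ z, IsMinZeroSum S) ∧ z.sum = A

/-- The distance between two factorizations. -/
def factDist {G : Type*} [AddCommGroup G] [DecidableEq G]
    (z z' : Multiset (Multiset G)) : ℕ :=
  max (Multiset.card (z - z')) (Multiset.card (z' - z))

/-- The catenary degree of the monoid of zero-sum sequences over `G`: the smallest
`N` such that any two factorizations of an element can be connected by a chain of
factorizations in which consecutive members have distance at most `N`. -/
noncomputable def CatenaryDegree (G : Type*) [AddCommGroup G] [DecidableEq G] : ℕ :=
  sInf {N : ℕ | ∀ (A : Multiset G) (z z' : Multiset (Multiset G)),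
    IsFactorization A z → IsFactorization A z' →
    Relation.ReflTransGen (fun x y => IsFactorization A y ∧ factDist x y ≤ N) z z'}

/-- The invariant `ℸ(G) = sup { min (L \ {2}) : 2 ∈ L ∈ 𝓛(G) }`. -/
noncomputable def Daleth (G : Type*) [AddCommGroup G] : ℕ :=
  sSup {m : ℕ | ∃ A : Multiset G, A.sum = 0 ∧ 2 ∈ LengthsSet A ∧
    (LengthsSet A \ {2}).Nonempty ∧ m = sInf (LengthsSet A \ {2})}

/-! If the support of `UV` does not generate `C₄ ⊕ C₄`, it lies in one of the three subgroups
of index two, each isomorphic to `C₂ ⊕ C₄`, and sets of lengths do not change when `U` and `V`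
are transported there. Over `C₂ ⊕ C₄` every sequence of length `5` has a nonempty zero-sum
subsequence, so atoms have length at most `5`. Since `0 ∉ UV` (otherwise `L(UV) = {2}`), a
factorization of length `5` forces `|U| = |V| = 5` and all its atoms to be of the form `g(-g)`;
hence `UV` is symmetric. The atoms of length `5` are the sequences `g³h(g+h)` with `2h = 0`, and
a symmetric product of two of them is `U(-U) = (g(-g))² · (g h (h-g)) · ((-g) h (g+h))`, which has
length `4`: a contradiction with `L(UV) ∩ [2,5] = {2,5}`. -/

namespace Multiset

variable {α β : Type*}

theorem exists_map_eq_of_forall_mem_range [Nonempty α] {f : α → β} {s : Multiset β}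
    (h : ∀ b ∈ s, b ∈ Set.range f) : ∃ t : Multiset α, t.map f = s :=
  ⟨s.map (Function.invFun f), by
    rw [map_map]
    exact (map_congr rfl fun b hb => Function.invFun_eq (h b hb)).trans (map_id' s)⟩

theorem exists_le_map_eq_of_le_map [Nonempty α] {f : α → β} (hf : Function.Injective f)
    {s : Multiset α} {t : Multiset β} (h : t ≤ s.map f) : ∃ u ≤ s, u.map f = t := by
  obtain ⟨u, rfl⟩ := exists_map_eq_of_forall_mem_range fun b hb =>
    (mem_map.1 (mem_of_le h hb)).imp fun _ ha => ha.2
  exact ⟨u, (map_le_map_iff hf).1 h, rfl⟩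

theorem exists_le_card_eq {s : Multiset α} {n : ℕ} (h : n ≤ card s) :
    ∃ t ≤ s, card t = n := by
  obtain ⟨t, ht⟩ := card_pos_iff_exists_mem.1
    (by rw [card_powersetCard]; exact Nat.choose_pos h : 0 < card (powersetCard n s))
  exact ⟨t, mem_powersetCard.1 ht⟩

/-- The multisets of cardinality `n` with elements in `l`, by structural recursion so that the
kernel can evaluate it. -/
def multisetsOfCard : List α → ℕ → List (Multiset α)
  | [], 0 => [0]
  | [], _ + 1 => []
  | x :: xs, n => (List.range (n + 1)).flatMap fun k =>
      (multisetsOfCard xs (n - k)).map (replicate k x + ·)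

theorem mem_multisetsOfCard [DecidableEq α] {l : List α} {s : Multiset α}
    (h : ∀ a ∈ s, a ∈ l) : s ∈ multisetsOfCard l (card s) := by
  induction l generalizing s with
  | nil =>
    obtain rfl : s = 0 := eq_zero_of_forall_notMem fun a ha => by simpa using h a ha
    simp [multisetsOfCard]
  | cons x xs ih =>
    have hs : replicate (count x s) x + s.filter (· ≠ x) = s := by
      rw [← filter_eq', filter_add_not]
    have hcard : card s - count x s = card (s.filter (· ≠ x)) := by
      conv_lhs => rw [← hs]
      simp
    simp only [multisetsOfCard, List.mem_flatMap, List.mem_range, List.mem_map]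
    refine ⟨count x s, Nat.lt_succ_of_le (count_le_card x s), _, ?_, hs⟩
    rw [hcard]
    exact ih fun a ha => by
      obtain ⟨has, hax⟩ := mem_filter.1 ha
      simpa [hax] using h a has

end Multiset

section ZeroSum

variable {G : Type*} [AddCommGroup G]

instance decidableIsMinZeroSum [DecidableEq G] :
    DecidablePred (IsMinZeroSum : Multiset G → Prop) := fun S =>
  decidable_of_iff (S ≠ 0 ∧ S.sum = 0 ∧ ∀ T ∈ S.powerset, T ≠ 0 → T ≠ S → T.sum ≠ 0)
    (by simp only [IsMinZeroSum, mem_powerset])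

namespace IsMinZeroSum

variable {S : Multiset G}

theorem eq_singleton_zero (hS : IsMinZeroSum S) (h0 : (0 : G) ∈ S) : S = {0} := by
  by_contra hne
  exact hS.2.2 {0} (singleton_le.2 h0) (singleton_ne_zero 0) (Ne.symm hne) (sum_singleton 0)

theorem two_le_card (hS : IsMinZeroSum S) (h0 : (0 : G) ∉ S) : 2 ≤ card S := by
  by_contra! hlt
  obtain ⟨a, rfl⟩ : ∃ a, S = {a} := card_eq_one.1 (by
    have := card_pos.2 hS.1
    omega)
  exact h0 (by simpa using hS.2.1.symm)

theorem eq_singleton_of_sum_eq (hS : IsMinZeroSum S) {f : Multiset (Multiset G)}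
    (hf : ∀ T ∈ f, IsMinZeroSum T) (hsum : f.sum = S) : f = {S} := by
  obtain ⟨T, hT⟩ := exists_mem_of_ne_zero fun (h : f = 0) => hS.1 (by simp [← hsum, h])
  obtain ⟨f', rfl⟩ := exists_cons_of_mem hT
  have hTS : T = S := by
    by_contra hne
    exact hS.2.2 T (hsum ▸ le_sum_of_mem hT) (hf T hT).1 hne (hf T hT).2.1
  subst hTS
  have hf' : f'.sum = 0 := by simpa using hsum
  rw [sum_eq_zero_iff] at hf'
  rw [eq_zero_of_forall_notMem fun U hU => (hf U (mem_cons_of_mem hU)).1 (hf' U hU)]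
  rfl

end IsMinZeroSum

theorem two_mul_card_le_card_sum {f : Multiset (Multiset G)} (hf : ∀ S ∈ f, IsMinZeroSum S)
    (h0 : (0 : G) ∉ f.sum) : 2 * card f ≤ card f.sum := by
  have := card_nsmul_le_sum (s := f.map card) (a := 2) fun n hn => by
    obtain ⟨S, hS, rfl⟩ := mem_map.1 hn
    exact (hf S hS).two_le_card fun h => h0 (mem_of_le (le_sum_of_mem hS) h)
  rw [card_map, smul_eq_mul] at this
  rw [mul_comm]
  exact this.trans_eq (card_join f).symm

theorem card_eq_two_of_card_sum_le {f : Multiset (Multiset G)} (hf : ∀ S ∈ f, IsMinZeroSum S)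
    (h0 : (0 : G) ∉ f.sum) (hle : card f.sum ≤ 2 * card f) : ∀ S ∈ f, card S = 2 := by
  intro S hS
  obtain ⟨f', rfl⟩ := exists_cons_of_mem hS
  rw [sum_cons, mem_add, not_or] at h0
  have hS2 := (hf S hS).two_le_card h0.1
  have hf' := two_mul_card_le_card_sum (fun T hT => hf T (mem_cons_of_mem hT)) h0.2
  simp only [sum_cons, card_add, card_cons] at hle
  omega

theorem map_neg_sum_eq_self {f : Multiset (Multiset G)}
    (hf : ∀ S ∈ f, S.sum = 0 ∧ card S = 2) : f.sum.map Neg.neg = f.sum := by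
  induction f using Multiset.induction_on with
  | empty => rfl
  | cons S f ih =>
    obtain ⟨hsum, hcard⟩ := hf S (mem_cons_self S f)
    obtain ⟨a, b, rfl⟩ := card_eq_two.1 hcard
    obtain rfl : b = -a := eq_neg_of_add_eq_zero_right (by simpa using hsum)
    rw [sum_cons, map_add, ih fun T hT => hf T (mem_cons_of_mem hT)]
    simp [cons_swap]

theorem IsMinZeroSum.card_le {n : ℕ}
    (h : ∀ T : Multiset G, card T = n → ∃ T' ≤ T, T' ≠ 0 ∧ T'.sum = 0)
    {S : Multiset G} (hS : IsMinZeroSum S) : card S ≤ n := by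
  by_contra! hlt
  obtain ⟨T, hTS, hTn⟩ := exists_le_card_eq hlt.le
  obtain ⟨T', hT'T, hT'0, hT'sum⟩ := h T hTn
  refine hS.2.2 T' (hT'T.trans hTS) hT'0 (fun hT'S => ?_) hT'sum
  have := card_le_card hT'T
  rw [hT'S] at this
  omega

theorem lengthsSet_add_subset_of_zero_mem {U V : Multiset G} (hU : IsMinZeroSum U)
    (hV : IsMinZeroSum V) (h0 : (0 : G) ∈ U + V) : LengthsSet (U + V) ⊆ {2} := by
  wlog hU0 : (0 : G) ∈ U generalizing U V
  · rw [add_comm] at h0 ⊢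
    exact this hV hU h0 ((mem_add.1 h0).resolve_right hU0)
  rw [hU.eq_singleton_zero hU0]
  rintro k ⟨f, rfl, hf, hsum⟩
  obtain ⟨S, hS, h0S⟩ := mem_join.1 (hsum ▸ mem_add.2 (Or.inl (mem_singleton_self 0)) :
    (0 : G) ∈ f.sum)
  obtain ⟨f', rfl⟩ := exists_cons_of_mem hS
  rw [(hf S hS).eq_singleton_zero h0S, sum_cons] at hsum
  rw [hV.eq_singleton_of_sum_eq (fun T hT => hf T (mem_cons_of_mem hT)) (add_left_cancel hsum)]
  rfl

theorem isMinZeroSum_pair {a : G} (ha : a ≠ 0) : IsMinZeroSum ({a, -a} : Multiset G) := by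
  refine ⟨by simp, by simp, fun T hT hT0 hTS => ?_⟩
  rw [← mem_powerset] at hT
  simp [insert_eq_cons, powerset_cons] at hT
  rcases hT with (rfl | rfl) | rfl | rfl <;> simp_all [insert_eq_cons]

theorem isMinZeroSum_triple {a b c : G} (ha : a ≠ 0) (hb : b ≠ 0) (hc : c ≠ 0)
    (hsum : a + b + c = 0) : IsMinZeroSum ({a, b, c} : Multiset G) := by
  have hab : a + b ≠ 0 := fun h => hc (by rwa [h, zero_add] at hsum)
  have hac : a + c ≠ 0 := fun h => hb (by
    rw [show b = a + b + c - (a + c) by abel, hsum, h, sub_zero])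
  have hbc : b + c ≠ 0 := fun h => ha (by
    rw [show a = a + b + c - (b + c) by abel, hsum, h, sub_zero])
  refine ⟨by simp, by simpa [add_assoc] using hsum, fun T hT hT0 hTS => ?_⟩
  rw [← mem_powerset] at hT
  simp [insert_eq_cons, powerset_cons] at hT
  rcases hT with ((rfl | rfl) | rfl | rfl) | (rfl | rfl) | rfl | rfl <;> simp_all [insert_eq_cons]

/-- The sequence `g³ h (g + h)`. -/
def fiveSeq (g h : G) : Multiset G := {g, g, g, h, g + h}

theorem four_mem_lengthsSet_fiveSeq_add {g h : G} (hg : g ≠ 0) (hh : h ≠ 0) (hgh : g ≠ h)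
    (h2 : h + h = 0) : 4 ∈ LengthsSet (fiveSeq g h + fiveSeq (-g) h) := by
  have hneg : -h = h := neg_eq_of_add_eq_zero_right h2
  refine ⟨{{g, -g}, {g, -g}, {g, h, -g + h}, {-g, h, g + h}}, rfl, ?_, ?_⟩
  · simp only [insert_eq_cons, mem_cons, mem_singleton]
    rintro S (rfl | rfl | rfl | rfl)
    · exact isMinZeroSum_pair hg
    · exact isMinZeroSum_pair hg
    · exact isMinZeroSum_triple hg hh (fun h0 => hgh (neg_add_eq_zero.1 h0))
        (by rw [add_comm g h, add_assoc, add_neg_cancel_left, h2])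
    · exact isMinZeroSum_triple (neg_ne_zero.2 hg) hh
        (fun h0 => hgh (by rw [eq_neg_of_add_eq_zero_left h0, hneg]))
        (by rw [add_comm (-g) h, add_assoc, neg_add_cancel_left, h2])
  · simp only [fiveSeq, insert_eq_cons, sum_cons, sum_singleton]
    simp only [← singleton_add]
    abel

end ZeroSum

section Transport

variable {H G : Type*} [AddCommGroup H] [AddCommGroup G] {ι : H →+ G}

theorem isMinZeroSum_map_iff (hι : Function.Injective ι) {S : Multiset H} :
    IsMinZeroSum (S.map ι) ↔ IsMinZeroSum S := by
  have hsum (T : Multiset H) : (T.map ι).sum = 0 ↔ T.sum = 0 := by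
    rw [← map_multiset_sum, map_eq_zero_iff ι hι]
  constructor
  · rintro ⟨hne, hS, hmin⟩
    refine ⟨fun h => hne (by rw [h, map_zero]), (hsum S).1 hS, fun T hT hT0 hTS => ?_⟩
    exact fun h => hmin (T.map ι) (map_le_map hT) (by simpa using hT0)
      (fun h' => hTS (map_injective hι h')) ((hsum T).2 h)
  · rintro ⟨hne, hS, hmin⟩
    refine ⟨by simpa using hne, (hsum S).2 hS, fun T hT hT0 hTS => ?_⟩
    obtain ⟨T', hT', rfl⟩ := exists_le_map_eq_of_le_map hι hT
    exact fun h => hmin T' hT' (by simpa using hT0) (fun h' => hTS (h' ▸ rfl)) ((hsum T').1 h)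

theorem lengthsSet_map (hι : Function.Injective ι) (A : Multiset H) :
    LengthsSet (A.map ι) = LengthsSet A := by
  ext k
  constructor
  · rintro ⟨f, rfl, hf, hsum⟩
    obtain ⟨f', rfl⟩ : ∃ f' : Multiset (Multiset H), f'.map (map ι) = f :=
      exists_map_eq_of_forall_mem_range fun S hS => by
        obtain ⟨T, -, rfl⟩ := exists_le_map_eq_of_le_map hι (hsum ▸ le_sum_of_mem hS)
        exact ⟨T, rfl⟩
    refine ⟨f', (card_map _ _).symm,
      fun S hS => (isMinZeroSum_map_iff hι).1 (hf _ (mem_map_of_mem _ hS)), ?_⟩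
    apply map_injective hι
    rw [← hsum]
    exact map_join _ _
  · rintro ⟨f, rfl, hf, rfl⟩
    refine ⟨f.map (map ι), card_map _ _, ?_, (map_join _ _).symm⟩
    simp only [mem_map]
    rintro _ ⟨S, hS, rfl⟩
    exact (isMinZeroSum_map_iff hι).2 (hf S hS)

end Transport

section C2C4

def elemsC2C4 : List (ZMod 2 × ZMod 4) :=
  [(0, 0), (0, 1), (0, 2), (0, 3), (1, 0), (1, 1), (1, 2), (1, 3)]

theorem mem_elemsC2C4 : ∀ x : ZMod 2 × ZMod 4, x ∈ elemsC2C4 := by decide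

theorem exists_zeroSum_le_of_card_eq_five {T : Multiset (ZMod 2 × ZMod 4)} (hT : card T = 5) :
    ∃ T' ≤ T, T' ≠ 0 ∧ T'.sum = 0 := by
  have key : ∀ T ∈ multisetsOfCard elemsC2C4 5,
      ¬ ∀ T' ∈ T.powerset, T' ≠ 0 → T'.sum ≠ 0 := by
    decide +kernel
  have := key T (hT ▸ mem_multisetsOfCard fun a _ => mem_elemsC2C4 a)
  push Not at this
  obtain ⟨T', hT', h⟩ := this
  exact ⟨T', mem_powerset.1 hT', h⟩

variable {S U V : Multiset (ZMod 2 × ZMod 4)}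

theorem IsMinZeroSum.card_le_five (hS : IsMinZeroSum S) : card S ≤ 5 :=
  hS.card_le fun _ => exists_zeroSum_le_of_card_eq_five

theorem IsMinZeroSum.exists_eq_fiveSeq (hS : IsMinZeroSum S) (h5 : card S = 5) :
    ∃ g h, S = fiveSeq g h ∧ g ≠ 0 ∧ h ≠ 0 ∧ g ≠ h ∧ h + h = 0 := by
  have key : ∀ S ∈ multisetsOfCard elemsC2C4 5, IsMinZeroSum S →
      ∃ g h, S = fiveSeq g h ∧ g ≠ 0 ∧ h ≠ 0 ∧ g ≠ h ∧ h + h = 0 := by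
    decide +kernel
  exact key S (h5 ▸ mem_multisetsOfCard fun a _ => mem_elemsC2C4 a) hS

theorem fiveSeq_eq_of_map_neg : ∀ g h : ZMod 2 × ZMod 4, IsMinZeroSum (fiveSeq g h) →
    ∀ g' h' : ZMod 2 × ZMod 4, IsMinZeroSum (fiveSeq g' h') →
    (fiveSeq g h + fiveSeq g' h').map Neg.neg = fiveSeq g h + fiveSeq g' h' →
    fiveSeq g' h' = fiveSeq (-g) h := by
  decide +kernel

theorem four_mem_lengthsSet_of_five_mem (hU : IsMinZeroSum U) (hV : IsMinZeroSum V)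
    (h5 : 5 ∈ LengthsSet (U + V)) : 4 ∈ LengthsSet (U + V) := by
  have h0 : (0 : ZMod 2 × ZMod 4) ∉ U + V := fun h0 => by
    simpa using lengthsSet_add_subset_of_zero_mem hU hV h0 h5
  obtain ⟨f, hcard, hf, hsum⟩ := h5
  have hU5 := hU.card_le_five
  have hV5 := hV.card_le_five
  have hUV : card (U + V) = 2 * card f :=
    le_antisymm (by rw [card_add, hcard]; omega)
      (hsum ▸ two_mul_card_le_card_sum hf (hsum ▸ h0))
  have hpairs := card_eq_two_of_card_sum_le hf (hsum ▸ h0) (hsum ▸ hUV.le)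
  have hsymm : (U + V).map Neg.neg = U + V :=
    hsum ▸ map_neg_sum_eq_self fun S hS => ⟨(hf S hS).2.1, hpairs S hS⟩
  rw [card_add, hcard] at hUV
  obtain ⟨g, h, rfl, hg, hh, hgh, h2⟩ := hU.exists_eq_fiveSeq (by omega)
  obtain ⟨g', h', rfl, -⟩ := hV.exists_eq_fiveSeq (by omega)
  rw [fiveSeq_eq_of_map_neg g h hU g' h' hV hsymm]
  exact four_mem_lengthsSet_fiveSeq_add hg hh hgh h2

end C2C4

section C4C4

theorem AddSubgroup.eq_top_of_isUnit_det {n : ℕ} {K : AddSubgroup (ZMod n × ZMod n)}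
    {x y : ZMod n × ZMod n} (hx : x ∈ K) (hy : y ∈ K)
    (hdet : IsUnit (x.1 * y.2 - x.2 * y.1)) : K = ⊤ := by
  obtain ⟨u, hu⟩ := hdet
  refine (AddSubgroup.eq_top_iff' K).2 fun g => ?_
  have hg : g = (↑u⁻¹ * (g.1 * y.2 - g.2 * y.1)) • x + (↑u⁻¹ * (x.1 * g.2 - x.2 * g.1)) • y := by
    ext
    · simp only [Prod.fst_add, Prod.smul_fst, smul_eq_mul]
      linear_combination (-g.1) * (Units.inv_mul u) + (g.1 * ↑u⁻¹) * hu
    · simp only [Prod.snd_add, Prod.smul_snd, smul_eq_mul]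
      linear_combination (-g.2) * (Units.inv_mul u) + (g.2 * ↑u⁻¹) * hu
  rw [hg]
  exact K.add_mem (ZMod.smul_mem hx _) (ZMod.smul_mem hy _)

/-- Embeddings of `C₂ ⊕ C₄` onto the three subgroups of index two of `C₄ ⊕ C₄`. -/
def indexTwoEmbedding : Fin 3 → (ZMod 2 × ZMod 4 →+ ZMod 4 × ZMod 4)
  | 0 => AddMonoidHom.mk' (fun x => (2 * x.1.val, x.2)) (by decide)
  | 1 => AddMonoidHom.mk' (fun x => (x.2, 2 * x.1.val)) (by decide)
  | 2 => AddMonoidHom.mk' (fun x => (2 * x.1.val + x.2, x.2)) (by decide)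

theorem injective_indexTwoEmbedding : ∀ i, Function.Injective (indexTwoEmbedding i) := by
  decide

set_option synthInstance.maxSize 2000 in
theorem det_mul_self_eq_one_of_not_mem_range :
    ∀ x : ZMod 4 × ZMod 4, x ∉ (indexTwoEmbedding 0).range →
    ∀ y : ZMod 4 × ZMod 4, y ∉ (indexTwoEmbedding 1).range →
    ∀ z : ZMod 4 × ZMod 4, z ∉ (indexTwoEmbedding 2).range →
    (x.1 * y.2 - x.2 * y.1) * (x.1 * y.2 - x.2 * y.1) = 1 ∨
      (x.1 * z.2 - x.2 * z.1) * (x.1 * z.2 - x.2 * z.1) = 1 := by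
  decide

theorem AddSubgroup.exists_le_range_indexTwoEmbedding {K : AddSubgroup (ZMod 4 × ZMod 4)}
    (hK : K ≠ ⊤) : ∃ i, K ≤ (indexTwoEmbedding i).range := by
  by_contra! h
  obtain ⟨x, hxK, hx⟩ := SetLike.not_le_iff_exists.1 (h 0)
  obtain ⟨y, hyK, hy⟩ := SetLike.not_le_iff_exists.1 (h 1)
  obtain ⟨z, hzK, hz⟩ := SetLike.not_le_iff_exists.1 (h 2)
  rcases det_mul_self_eq_one_of_not_mem_range x hx y hy z hz with hdet | hdet
  · exact hK (AddSubgroup.eq_top_of_isUnit_det hxK hyK (.of_mul_eq_one _ hdet))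
  · exact hK (AddSubgroup.eq_top_of_isUnit_det hxK hzK (.of_mul_eq_one _ hdet))

end C4C4

theorem statement5 (U V : Multiset (ZMod 4 × ZMod 4))
    (hU : IsMinZeroSum U) (hV : IsMinZeroSum V)
    (hL : LengthsSet (U + V) ∩ Set.Icc 2 5 = {2, 5}) :
    AddSubgroup.closure ((U + V).toFinset : Set (ZMod 4 × ZMod 4)) = ⊤ := by
  have hmem (k : ℕ) := Set.ext_iff.1 hL k
  have h5 : 5 ∈ LengthsSet (U + V) := ((hmem 5).2 (by simp)).1
  have h4 : 4 ∉ LengthsSet (U + V) := fun h4 => by simpa using (hmem 4).1 ⟨h4, by norm_num⟩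
  by_contra hne
  obtain ⟨i, hi⟩ := AddSubgroup.exists_le_range_indexTwoEmbedding hne
  have hinj := injective_indexTwoEmbedding i
  have hrange (W : Multiset (ZMod 4 × ZMod 4)) (hW : W ≤ U + V) :
      ∀ g ∈ W, g ∈ Set.range (indexTwoEmbedding i) := fun g hg =>
    hi (AddSubgroup.subset_closure (by simpa using mem_of_le hW hg))
  obtain ⟨U, rfl⟩ := exists_map_eq_of_forall_mem_range (hrange U (le_add_right U V))
  obtain ⟨V, rfl⟩ := exists_map_eq_of_forall_mem_range (hrange _ (le_add_left V _))
  rw [isMinZeroSum_map_iff hinj] at hU hV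
  rw [← map_add, lengthsSet_map hinj] at h5 h4
  exact h4 (four_mem_lengthsSet_of_five_mem hU hV h5)
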